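/- arXiv:2408.12092 — 3 statements merged into one kernel-verified Lean document; each statement's English description precedes it below -/
import Mathlib

section
/- Quasi-periodicity of the ASEP R matrix: for indices a, b, i', j' ∈ ℤ_{n+1}, R(z)^{a,b}_{i',j'} = z^{δ_{j',0} - δ_{b,0}} · t^{-θ(i'≠0, j'=0) + θ(a=0, b≠0)} · R(z)^{a-1,b-1}_{i'-1,j'-1}, where the subtraction of 1 from indices is taken cyclically in ℤ_{n+1} and all indices are represented in {0,...,n} when evaluating the inequalities in the definition of R. -/
/-!
Cyclically subtracting 1 is a bijection of `ℤ_{n+1}`, so it preserves the support of `R`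
(the entries with `{a, b} = {i', j'}`) and the diagonal entries. The only thing it changes is
the comparison `α < β` in the off-diagonal entries: `α - 1 < β - 1` agrees with `α < β` unless
one of the two indices is `0`, which becomes the largest index `n`. The prefactor
`z^{…} t^{…}` compensates exactly for this flip.
-/

/-- The ASEP R matrix: `Rmat t z a b c d = R(z)^{a,b}_{c,d}`. -/
def Rmat {K : Type*} [DivisionRing K] {n : ℕ} (t z : K) (a b c d : Fin (n + 1)) : K :=
  if a = c ∧ b = d then
    (if c = d then 1 else (1 - z) * t ^ (if c < d then 1 else 0) / (1 - t * z))
  else if a = d ∧ b = c then (1 - t) * z ^ (if d < c then 1 else 0) / (1 - t * z)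
  else 0

namespace Fin

variable {n : ℕ}

theorem sub_one_lt_sub_one_iff {a b : Fin (n + 1)} :
    a - 1 < b - 1 ↔ a ≠ 0 ∧ (b = 0 ∨ a < b) := by
  simp only [Fin.lt_def, coe_sub_one, ← Fin.val_eq_zero_iff, ne_eq]
  split_ifs <;> omega

theorem pow_ite_lt_eq_zpow_mul_pow_ite_sub_one_lt {G : Type*} [GroupWithZero G] {x : G}
    (hx : x ≠ 0) {a b : Fin (n + 1)} (hab : a ≠ b) :
    x ^ (if a < b then 1 else 0 : ℕ) =
      x ^ ((if a = 0 then 1 else 0) - (if b = 0 then 1 else 0) : ℤ) *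
        x ^ (if a - 1 < b - 1 then 1 else 0 : ℕ) := by
  simp only [sub_one_lt_sub_one_iff]
  by_cases ha : a = 0 <;> by_cases hb : b = 0
  · exact absurd (ha.trans hb.symm) hab
  · simp [ha, hb, Fin.pos_iff_ne_zero]
  · simp [ha, hb, hx]
  · simp [ha, hb]

end Fin

section Rmat

variable {K : Type*} {n : ℕ} {t z : K} {a b : Fin (n + 1)}

section DivisionRing

variable [DivisionRing K]

@[simp]
theorem Rmat_self : Rmat t z a a a a = 1 := by
  simp [Rmat]

theorem Rmat_of_ne (hab : a ≠ b) :
    Rmat t z a b a b = (1 - z) * t ^ (if a < b then 1 else 0) / (1 - t * z) := by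
  simp [Rmat, hab]

theorem Rmat_swap_of_ne (hab : a ≠ b) :
    Rmat t z a b b a = (1 - t) * z ^ (if a < b then 1 else 0) / (1 - t * z) := by
  simp [Rmat, hab, Ne.symm hab]

theorem Rmat_eq_zero {c d : Fin (n + 1)} (h₁ : ¬(a = c ∧ b = d)) (h₂ : ¬(a = d ∧ b = c)) :
    Rmat t z a b c d = 0 := by
  simp [Rmat, h₁, h₂]

end DivisionRing

variable [Field K]

theorem Rmat_eq_zpow_mul_Rmat_sub_one (ht : t ≠ 0) (hab : a ≠ b) :
    Rmat t z a b a b = t ^ ((if a = 0 then 1 else 0) - (if b = 0 then 1 else 0) : ℤ) *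
      Rmat t z (a - 1) (b - 1) (a - 1) (b - 1) := by
  have hab' : a - 1 ≠ b - 1 := fun h => hab (sub_left_inj.mp h)
  rw [Rmat_of_ne hab, Rmat_of_ne hab', Fin.pow_ite_lt_eq_zpow_mul_pow_ite_sub_one_lt ht hab]
  ring

theorem Rmat_swap_eq_zpow_mul_Rmat_sub_one (hz : z ≠ 0) (hab : a ≠ b) :
    Rmat t z a b b a = z ^ ((if a = 0 then 1 else 0) - (if b = 0 then 1 else 0) : ℤ) *
      Rmat t z (a - 1) (b - 1) (b - 1) (a - 1) := by
  have hab' : a - 1 ≠ b - 1 := fun h => hab (sub_left_inj.mp h)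
  rw [Rmat_swap_of_ne hab, Rmat_swap_of_ne hab',
    Fin.pow_ite_lt_eq_zpow_mul_pow_ite_sub_one_lt hz hab]
  ring

end Rmat

theorem stmt4_general {K : Type*} [Field K] {n : ℕ} (t z : K)
    (ht : t ≠ 0) (hz : z ≠ 0)
    (a b i' j' : Fin (n + 1)) :
    Rmat t z a b i' j'
      = z ^ (((if j' = 0 then 1 else 0) - (if b = 0 then 1 else 0) : ℤ)) *
        t ^ ((-(if i' ≠ 0 ∧ j' = 0 then 1 else 0) + (if a = 0 ∧ b ≠ 0 then 1 else 0) : ℤ)) *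
        Rmat t z (a - 1) (b - 1) (i' - 1) (j' - 1) := by
  by_cases hsame : a = i' ∧ b = j'
  · obtain ⟨rfl, rfl⟩ := hsame
    by_cases hab : a = b
    · subst hab
      simp
    rw [Rmat_eq_zpow_mul_Rmat_sub_one ht hab]
    by_cases ha : a = 0 <;> by_cases hb : b = 0 <;> simp_all
  by_cases hswap : a = j' ∧ b = i'
  · obtain ⟨rfl, rfl⟩ := hswap
    have hab : a ≠ b := fun h => hsame ⟨h, h.symm⟩
    rw [Rmat_swap_eq_zpow_mul_Rmat_sub_one hz hab]
    by_cases ha : a = 0 <;> by_cases hb : b = 0 <;> simp_all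
  rw [Rmat_eq_zero hsame hswap, Rmat_eq_zero, mul_zero] <;> simpa only [sub_left_inj]

/-- Quasi-periodicity of the ASEP R matrix: for indices in `ℤ_{n+1}` (cyclic
subtraction of 1, realized by `Fin (n+1)` arithmetic),
`R(z)^{a,b}_{i',j'} = z^{δ_{j'0} - δ_{b0}} t^{-θ(i'≠0,j'=0)+θ(a=0,b≠0)} R(z)^{a-1,b-1}_{i'-1,j'-1}`. -/
theorem stmt4 {K : Type*} [Field K] {n : ℕ} (t z : K)
    (ht : t ≠ 0) (hz : z ≠ 0) (htz : t * z ≠ 1)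
    (a b i' j' : Fin (n + 1)) :
    Rmat t z a b i' j'
      = z ^ (((if j' = 0 then 1 else 0) - (if b = 0 then 1 else 0) : ℤ)) *
        t ^ ((-(if i' ≠ 0 ∧ j' = 0 then 1 else 0) + (if a = 0 ∧ b ≠ 0 then 1 else 0) : ℤ)) *
        Rmat t z (a - 1) (b - 1) (i' - 1) (j' - 1) :=
  stmt4_general t z ht hz a b i' j'
end

section
/- The operator L(z) on F_1 ⊗ F_l is stochastic in the sense that for every α ∈ {0,...,n} and every a ∈ D_l, the sum ∑_{β, b} L(z)^{β,b}_{α,a} = 1 - z t^l, independent of α and a. -/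
/-!
For fixed `β` the Kronecker condition `e_β + b = e_α + a` has exactly one solution
`b = a + e_α - e_β` in `D_l` when `β = α` or `a_β ≠ 0`, and none otherwise; in the latter case the
coefficient `1 - t ^ a_β` vanishes anyway. So summing over `b` just leaves the coefficient, and
these coefficients telescope: with `G_j = z ^ [j ≤ α] * t ^ (a_j + ⋯ + a_n)` the `β`-th one is
`G_{β+1} - G_β`, while `G_0 = z t^l` and `G_{n+1} = 1`.
-/

open Finset

section KroneckerShift

variable {ι : Type*} [DecidableEq ι] {a b b' : ι → ℕ} {α β : ι}

theorem sum_eq_of_single_add_eq [Fintype ι]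
    (h : ∀ i, (if i = β then 1 else 0) + b i = (if i = α then 1 else 0) + a i) :
    ∑ i, b i = ∑ i, a i := by
  have := sum_congr rfl fun i (_ : i ∈ univ) => h i
  simpa [sum_add_distrib] using this

theorem eq_of_single_add_eq
    (hb : ∀ i, (if i = β then 1 else 0) + b i = (if i = α then 1 else 0) + a i)
    (hb' : ∀ i, (if i = β then 1 else 0) + b' i = (if i = α then 1 else 0) + a i) :
    b = b' :=
  funext fun i => by have := hb i; have := hb' i; omega

theorem single_add_shift_eq (h : α = β ∨ a β ≠ 0) (i : ι) :
    (if i = β then 1 else 0) + (a i + (if i = α then 1 else 0) - (if i = β then 1 else 0)) =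
      (if i = α then 1 else 0) + a i := by
  rcases h with rfl | h <;> split_ifs <;> subst_vars <;> omega

variable [Fintype ι]

theorem card_filter_single_add_eq_one {l : ℕ} (ha : ∑ i, a i = l) (h : α = β ∨ a β ≠ 0) :
    #{b : ι → Fin (l + 1) | (∑ i, (b i : ℕ) = l) ∧
        ∀ i, (if i = β then 1 else 0) + (b i : ℕ) = (if i = α then 1 else 0) + a i} = 1 := by
  set shift : ι → ℕ := fun i => a i + (if i = α then 1 else 0) - (if i = β then 1 else 0)
  have hshift := single_add_shift_eq h
  have hsum : ∑ i, shift i = l := ha ▸ sum_eq_of_single_add_eq hshift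
  have hlt (i : ι) : shift i < l + 1 :=
    Nat.lt_succ_of_le (hsum ▸ single_le_sum (fun j _ => Nat.zero_le (shift j)) (mem_univ i))
  rw [card_eq_one]
  refine ⟨fun i => ⟨shift i, hlt i⟩, ?_⟩
  ext b
  simp only [mem_filter, mem_univ, true_and, mem_singleton]
  refine ⟨fun ⟨_, hb⟩ => funext fun i => Fin.ext ?_, fun hb => hb ▸ ⟨hsum, hshift⟩⟩
  exact congrFun (eq_of_single_add_eq hb hshift) i

theorem sum_filter_kronecker_mul {K : Type*} [Semiring K] {l : ℕ} (ha : ∑ i, a i = l) (c : K)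
    (hc : a β = 0 → α ≠ β → c = 0) :
    ∑ b ∈ ({b : ι → Fin (l + 1) | ∑ i, (b i : ℕ) = l} : Finset _),
      (if ∀ i, (if i = β then 1 else 0) + (b i : ℕ) = (if i = α then 1 else 0) + a i
        then (1 : K) else 0) * c = c := by
  by_cases h : α = β ∨ a β ≠ 0
  · simp only [ite_mul, one_mul, zero_mul]
    rw [← sum_filter, filter_filter, sum_const, card_filter_single_add_eq_one ha h, one_smul]
  · push Not at h
    simp [hc h.2 h.1]

end KroneckerShift

section Telescoping

variable {K : Type*} [CommRing K] {n : ℕ} (t z : K) (a : Fin (n + 1) → ℕ) (α : Fin (n + 1))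

def stepWeight (β : Fin (n + 1)) : K :=
  t ^ (∑ i ∈ Ioi β, a i) * ((1 - t ^ a β * z ^ (if α = β then 1 else 0)) *
    z ^ (if β < α then 1 else 0))

def tailWeight (j : ℕ) : K :=
  z ^ (if j ≤ α then 1 else 0) * t ^ ∑ i : Fin (n + 1) with j ≤ i.val, a i

theorem sum_filter_succ_le_eq_sum_Ioi (β : Fin (n + 1)) :
    ∑ i : Fin (n + 1) with (β : ℕ) + 1 ≤ i.val, a i = ∑ i ∈ Ioi β, a i := by
  congr 1
  ext i
  simp

theorem sum_filter_le_eq_add (β : Fin (n + 1)) :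
    ∑ i : Fin (n + 1) with (β : ℕ) ≤ i.val, a i =
      a β + ∑ i : Fin (n + 1) with (β : ℕ) + 1 ≤ i.val, a i := by
  rw [← add_sum_erase _ _ (by simp : β ∈ _)]
  congr 2
  ext i
  simp [Fin.ext_iff]
  omega

theorem tailWeight_succ_sub (β : Fin (n + 1)) :
    tailWeight t z a α (β + 1) - tailWeight t z a α β = stepWeight t z a α β := by
  simp only [tailWeight, stepWeight, sum_filter_le_eq_add, sum_filter_succ_le_eq_sum_Ioi, pow_add,
    Fin.lt_def, Fin.ext_iff]
  split_ifs <;> first | omega | ring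

theorem tailWeight_zero : tailWeight t z a α 0 = z * t ^ ∑ i, a i := by
  simp [tailWeight]

theorem tailWeight_last : tailWeight t z a α (n + 1) = 1 := by
  simp [tailWeight, α.is_lt.not_ge, Nat.not_lt.mpr (Fin.is_le _)]

theorem sum_stepWeight : ∑ β, stepWeight t z a α β = 1 - z * t ^ ∑ i, a i := by
  simp only [← tailWeight_succ_sub]
  rw [Fin.sum_univ_eq_sum_range (fun j => tailWeight t z a α (j + 1) - tailWeight t z a α j),
    sum_range_sub, tailWeight_zero, tailWeight_last]

end Telescoping

/-- Stochasticity of the operator `L(z)`: for `a ∈ D_l` (i.e. `a : Fin (n+1) → ℕ` with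
`∑ a_i = l`) and any `α ∈ {0,…,n}`, the sum of the matrix elements
`L(z)^{β,b}_{α,a} = δ^{e_β+b}_{e_α+a} · t^{a_{β+1}+⋯+a_n} · (1 - t^{a_β} z^{θ(α=β)}) · z^{θ(α>β)}`
over `β ∈ {0,…,n}` and `b ∈ D_l` (whose components are necessarily `≤ l`, so `b` ranges over
`Fin (l+1)`-valued functions with component sum `l`) equals `1 - z t^l`. -/
theorem stmt7 {K : Type*} [Field K] {n l : ℕ} (t z : K)
    (a : Fin (n + 1) → ℕ) (ha : ∑ i, a i = l) (α : Fin (n + 1)) :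
    ∑ β : Fin (n + 1),
      ∑ b ∈ Finset.univ.filter (fun b : Fin (n + 1) → Fin (l + 1) => ∑ i, (b i : ℕ) = l),
        (if ∀ i : Fin (n + 1),
              (if i = β then 1 else 0) + (b i : ℕ) = (if i = α then 1 else 0) + a i
          then (1 : K) else 0) *
        t ^ (∑ i ∈ Finset.Ioi β, a i) *
        (1 - t ^ (a β) * z ^ (if α = β then 1 else 0)) *
        z ^ (if β < α then 1 else 0)
      = 1 - z * t ^ l := by
  simp only [mul_assoc]
  refine (sum_congr rfl fun β _ => ?_).trans (ha ▸ sum_stepWeight t z a α)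
  rw [stepWeight]
  -- `convert` only has to reconcile the `Decidable` instance of the `∀ i` condition.
  convert sum_filter_kronecker_mul (α := α) (β := β) ha _ ?_
  intro hβ hαβ
  simp [hβ, hαβ]
end

section
/- If operators X_0,...,X_n and X̂_0,...,X̂_n on a space with a trace satisfy the hat relation t^{θ(α>β)} X_β X_α − t^{θ(α<β)} X_α X_β = X_α X̂_β − X̂_α X_β for all 0 ≤ α, β ≤ n, then the vector ∑_σ tr(X_{σ_1}···X_{σ_L}) |σ⟩ is annihilated by the ASEP Markov matrix H = ∑_{i∈ℤ_L} H^{loc}_{i,i+1}. -/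
/-!
Multiplying the hat relation for the adjacent pair `(σ i, σ (i + 1))` by the rest of the word and
rotating it under the cyclic trace, the `i`-th local term of `H` becomes `S (i + 1) - S i`, where
`S i` is the trace of the word with `X (σ i)` replaced by `Xhat (σ i)`. Summed over `i ∈ ℤ/L`
these differences telescope to zero.
-/

theorem List.ofFn_comp_add_eq_rotate {α : Type*} {L : ℕ} [NeZero L] (g : Fin L → α) (i : Fin L) :
    List.ofFn (fun j => g (j + i)) = (List.ofFn g).rotate i := by
  apply List.ext_getElem
  · simp
  · intro k _ _
    simp only [List.getElem_ofFn, List.getElem_rotate, List.length_ofFn]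
    congr 1

theorem List.ofFn_succ_succ_add_congr {α : Type*} {m : ℕ} {g g' : Fin (m + 2) → α}
    (i : Fin (m + 2)) (h : ∀ k, k ≠ i → k ≠ i + 1 → g k = g' k) :
    (List.ofFn fun j : Fin m => g (j.succ.succ + i)) = List.ofFn fun j => g' (j.succ.succ + i) := by
  congr 1
  funext j
  apply h
  · rw [Ne, add_eq_right]
    exact Fin.succ_ne_zero _
  · rw [add_comm i 1, Ne, add_left_inj]
    exact Fin.succ_succ_ne_one j

section CyclicFunction

variable {M β : Type*} [Monoid M] {f : M → β}

theorem apply_prod_rotate (hf : ∀ a b, f (a * b) = f (b * a)) (l : List M) (k : ℕ) :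
    f (l.rotate k).prod = f l.prod := by
  rw [List.rotate_eq_drop_append_take_mod, List.prod_append, hf, ← List.prod_append,
    List.take_append_drop]

theorem apply_prod_ofFn_comp_add (hf : ∀ a b, f (a * b) = f (b * a)) {L : ℕ} [NeZero L]
    (g : Fin L → M) (i : Fin L) :
    f (List.ofFn fun j => g (j + i)).prod = f (List.ofFn g).prod := by
  rw [List.ofFn_comp_add_eq_rotate, apply_prod_rotate hf]

theorem apply_prod_ofFn_eq_mul_mul (hf : ∀ a b, f (a * b) = f (b * a)) {m : ℕ}
    (g : Fin (m + 2) → M) (i : Fin (m + 2)) :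
    f (List.ofFn g).prod
      = f (g i * (g (i + 1) * (List.ofFn fun j : Fin m => g (j.succ.succ + i)).prod)) := by
  rw [← apply_prod_ofFn_comp_add hf g i, List.ofFn_succ, List.prod_cons, List.ofFn_succ,
    List.prod_cons, Fin.succ_zero_eq_one, zero_add, add_comm 1 i]

end CyclicFunction

section HatRelation

variable {R A : Type*} [CommRing R] [Ring A] [Algebra R A] {n L : ℕ}

def hatTrace (tr : A →ₗ[R] R) (X Xhat : Fin (n + 1) → A) (σ : Fin L → Fin (n + 1))
    (i : Fin L) : R :=
  tr (List.ofFn (Function.update (X ∘ σ) i (Xhat (σ i)))).prod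

theorem local_term_eq_hatTrace_sub [NeZero L] (t : R) (tr : A →ₗ[R] R)
    (htr : ∀ a b : A, tr (a * b) = tr (b * a)) (X Xhat : Fin (n + 1) → A)
    (hhat : ∀ α β : Fin (n + 1),
      t ^ (if β < α then 1 else 0) • (X β * X α) - t ^ (if α < β then 1 else 0) • (X α * X β)
        = X α * Xhat β - Xhat α * X β)
    (σ : Fin L → Fin (n + 1)) (i : Fin L) :
    t ^ (if σ (i + 1) < σ i then 1 else 0) *
          tr ((List.ofFn fun j => X ((σ ∘ Equiv.swap i (i + 1)) j)).prod)
        - t ^ (if σ i < σ (i + 1) then 1 else 0) * tr ((List.ofFn fun j => X (σ j)).prod)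
      = hatTrace tr X Xhat σ (i + 1) - hatTrace tr X Xhat σ i := by
  obtain _ | _ | m := L
  · exact absurd rfl (NeZero.ne 0)
  · simp -- on a single site `i + 1 = i`, so both sides vanish
  have hne : i ≠ i + 1 := by simp
  set rest := (List.ofFn fun j : Fin m => X (σ (j.succ.succ + i))).prod
  have hrest {g : Fin (m + 2) → A} (hg : ∀ k, k ≠ i → k ≠ i + 1 → g k = X (σ k)) :
      (List.ofFn fun j : Fin m => g (j.succ.succ + i)).prod = rest :=
    congrArg List.prod (List.ofFn_succ_succ_add_congr i hg)
  unfold hatTrace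
  rw [apply_prod_ofFn_eq_mul_mul htr _ i, apply_prod_ofFn_eq_mul_mul htr _ i,
    apply_prod_ofFn_eq_mul_mul htr _ i, apply_prod_ofFn_eq_mul_mul htr _ i]
  simp only [Function.comp_apply, Equiv.swap_apply_left, Equiv.swap_apply_right,
    Function.update_self, Function.update_of_ne hne, Function.update_of_ne hne.symm]
  rw [hrest (g := fun k => X (σ (Equiv.swap i (i + 1) k)))
      fun k h₁ h₂ => by rw [Equiv.swap_apply_of_ne_of_ne h₁ h₂],
    hrest (g := Function.update (X ∘ σ) (i + 1) _) fun k _ h₂ => Function.update_of_ne h₂ _ _,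
    hrest (g := Function.update (X ∘ σ) i _) fun k h₁ _ => Function.update_of_ne h₁ _ _]
  have key := congrArg (fun a => tr (a * rest)) (hhat (σ i) (σ (i + 1)))
  simpa only [sub_mul, smul_mul_assoc, map_sub, map_smul, smul_eq_mul, mul_assoc] using key

end HatRelation

/-- If operators `X_0,…,X_n` and `X̂_0,…,X̂_n` in an algebra with a cyclic trace satisfy
the hat relation `t^{θ(α>β)} X_β X_α − t^{θ(α<β)} X_α X_β = X_α X̂_β − X̂_α X_β`, then the
vector `∑_σ tr(X_{σ_1}⋯X_{σ_L}) |σ⟩` is annihilated by the ASEP Markov matrix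
`H = ∑_{i∈ℤ_L} H^{loc}_{i,i+1}`: each component of `H` applied to this vector vanishes. -/
theorem stmt10 {A : Type*} [Ring A] [Algebra ℂ A] {n L : ℕ} [NeZero L]
    (t : ℂ) (tr : A →ₗ[ℂ] ℂ) (htr : ∀ a b : A, tr (a * b) = tr (b * a))
    (X Xhat : Fin (n + 1) → A)
    (hhat : ∀ α β : Fin (n + 1),
      t ^ (if β < α then 1 else 0) • (X β * X α) - t ^ (if α < β then 1 else 0) • (X α * X β)
        = X α * Xhat β - Xhat α * X β) :
    ∀ σ : Fin L → Fin (n + 1),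
      ∑ i : Fin L,
        (t ^ (if σ (i + 1) < σ i then 1 else 0) *
            tr ((List.ofFn fun j => X ((σ ∘ Equiv.swap i (i + 1)) j)).prod)
          - t ^ (if σ i < σ (i + 1) then 1 else 0) *
            tr ((List.ofFn fun j => X (σ j)).prod)) = 0 := by
  intro σ
  rw [Finset.sum_congr rfl fun i _ => local_term_eq_hatTrace_sub t tr htr X Xhat hhat σ i,
    Finset.sum_sub_distrib, sub_eq_zero]
  exact Equiv.sum_comp (Equiv.addRight (1 : Fin L)) _
end
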